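/- (Heat equation for second-order theta functions.) Fix g ≥ 1, ε ∈ {0,1/2}^g, indices 1 ≤ a, b ≤ g, and let E be the symmetric g×g matrix E = e_a e_bᵗ + e_b e_aᵗ if a ≠ b and E = e_a e_aᵗ if a = b (e_i the standard basis vectors). Then for every τ ∈ H_g and z ∈ ℂ^g, the second partial derivative of Θ[ε](τ,·) in the directions e_a and e_b at z equals 4πi (1+δ_{ab}) times the derivative at t = 0 of the function t ↦ Θ[ε](τ + tE, z) (t ∈ ℂ), where δ_{ab} is the Kronecker delta. -/

import Mathlib

open Complex Matrix BigOperators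

noncomputable section

/-- τ lies in the Siegel upper half-space: symmetric with positive definite imaginary part. -/
def IsSiegel {g : ℕ} (τ : Matrix (Fin g) (Fin g) ℂ) : Prop :=
  τ.IsSymm ∧ (τ.map Complex.im).PosDef

/-- The `n`-th term of the series defining the theta function with characteristic `[ε;δ]`. -/
def thetaCharTerm {g : ℕ} (τ : Matrix (Fin g) (Fin g) ℂ) (ε δ : Fin g → ℝ)
    (z : Fin g → ℂ) (n : Fin g → ℤ) : ℂ :=
  Complex.exp ((Real.pi : ℂ) * Complex.I *
      ((fun j => (n j : ℂ) + (ε j : ℂ)) ⬝ᵥ (τ *ᵥ fun j => (n j : ℂ) + (ε j : ℂ)))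
    + 2 * (Real.pi : ℂ) * Complex.I *
      ((fun j => (n j : ℂ) + (ε j : ℂ)) ⬝ᵥ fun j => z j + (δ j : ℂ)))

/-- The theta function with characteristic `[ε;δ]`. -/
def thetaChar {g : ℕ} (τ : Matrix (Fin g) (Fin g) ℂ) (ε δ : Fin g → ℝ)
    (z : Fin g → ℂ) : ℂ :=
  ∑' n : Fin g → ℤ, thetaCharTerm τ ε δ z n

/-- The Riemann theta function. -/
def riemannTheta {g : ℕ} (τ : Matrix (Fin g) (Fin g) ℂ) (z : Fin g → ℂ) : ℂ :=
  thetaChar τ 0 0 z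

/-- Interpret a mod-2 vector as a vector with entries in {0, 1/2}. -/
def toHalf {g : ℕ} (x : Fin g → ZMod 2) : Fin g → ℝ := fun i => ((x i).val : ℝ) / 2

/-- The theta function of the second order with characteristic ε. -/
def theta2 {g : ℕ} (τ : Matrix (Fin g) (Fin g) ℂ) (ε : Fin g → ℝ) (z : Fin g → ℂ) : ℂ :=
  ∑' n : Fin g → ℤ,
    Complex.exp (2 * (Real.pi : ℂ) * Complex.I *
        ((fun j => (n j : ℂ) + (ε j : ℂ)) ⬝ᵥ (τ *ᵥ fun j => (n j : ℂ) + (ε j : ℂ)))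
      + 4 * (Real.pi : ℂ) * Complex.I *
        ((fun j => (n j : ℂ) + (ε j : ℂ)) ⬝ᵥ z))

/-- The Igusa modular form F_g. -/
def igusaF (g : ℕ) (τ : Matrix (Fin g) (Fin g) ℂ) : ℂ :=
  2 ^ g * ∑ m : (Fin g → ZMod 2) × (Fin g → ZMod 2),
      (thetaChar τ (toHalf m.1) (toHalf m.2) 0) ^ 16
    - (∑ m : (Fin g → ZMod 2) × (Fin g → ZMod 2),
      (thetaChar τ (toHalf m.1) (toHalf m.2) 0) ^ 8) ^ 2

/-- The standard symplectic form matrix J. -/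
def sympJ (g : ℕ) : Matrix (Fin g ⊕ Fin g) (Fin g ⊕ Fin g) ℤ :=
  Matrix.fromBlocks 0 1 (-1) 0

/-- The block matrix [[a,b],[c,d]] is symplectic. -/
def IsSymplectic {g : ℕ} (a b c d : Matrix (Fin g) (Fin g) ℤ) : Prop :=
  (Matrix.fromBlocks a b c d)ᵀ * sympJ g * Matrix.fromBlocks a b c d = sympJ g

/-- Entrywise coercion of an integer matrix to a complex matrix. -/
def intMat {g : ℕ} (a : Matrix (Fin g) (Fin g) ℤ) : Matrix (Fin g) (Fin g) ℂ :=
  a.map (Int.cast : ℤ → ℂ)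

/-- The action of a symplectic block matrix on the Siegel space: τ ↦ (aτ+b)(cτ+d)⁻¹. -/
def sympAct {g : ℕ} (a b c d : Matrix (Fin g) (Fin g) ℤ)
    (τ : Matrix (Fin g) (Fin g) ℂ) : Matrix (Fin g) (Fin g) ℂ :=
  (intMat a * τ + intMat b) * (intMat c * τ + intMat d)⁻¹



/- ===== auxiliary lemmas ===== -/

lemma summable_pi_prod : ∀ (g : ℕ) (f : Fin g → ℤ → ℝ), (∀ j m, 0 ≤ f j m) →
    (∀ j, Summable (f j)) → Summable (fun n : Fin g → ℤ => ∏ j, f j (n j)) := by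
  intro g
  induction g with
  | zero => intro f _ _; simpa using summable_of_finite_support (Set.toFinite _)
  | succ g ih =>
    intro f hpos hsum
    have h2 : Summable (fun n : Fin g → ℤ => ∏ j : Fin g, f j.succ (n j)) :=
      ih (fun j => f j.succ) (fun j m => hpos _ _) (fun j => hsum _)
    have h1' : (0:ℤ → ℝ) ≤ f 0 := fun m => hpos 0 m
    have h2' : (0:(Fin g → ℤ) → ℝ) ≤ fun n : Fin g → ℤ => ∏ j : Fin g, f j.succ (n j) :=
      fun n => Finset.prod_nonneg fun j _ => hpos _ _
    have key : Summable (fun p : ℤ × (Fin g → ℤ) =>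
        f 0 p.1 * ∏ j : Fin g, f j.succ (p.2 j)) :=
      Summable.mul_of_nonneg (f := f 0)
        (g := fun n : Fin g → ℤ => ∏ j : Fin g, f j.succ (n j)) (hsum 0) h2 h1' h2'
    have key2 := key.comp_injective (Fin.consEquiv (fun _ : Fin (g+1) => ℤ)).symm.injective
    refine key2.congr fun n => ?_
    simp [Fin.prod_univ_succ, Fin.cons_succ, Fin.tail]

lemma summable_exp_neg_abs_int : Summable fun m : ℤ => Real.exp (-|(m:ℝ)|) := by
  rw [summable_int_iff_summable_nat_and_neg]
  constructor <;>
  · apply Real.summable_exp_neg_nat.congr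
    intro n
    push_cast
    simp [abs_of_nonneg, Nat.cast_nonneg]

lemma summable_one_dim (c C e : ℝ) (hc : 0 < c) :
    Summable (fun m : ℤ => (1 + |(m:ℝ) + e|)^2 *
      Real.exp (-c * ((m:ℝ)+e)^2 + C * |(m:ℝ)+e|)) := by
  set K : ℝ := Real.exp ((C+3)^2/(4*c) + |e|) with hK
  apply Summable.of_nonneg_of_le (fun m => by positivity)
    (fun m => ?_) (summable_exp_neg_abs_int.mul_left K)
  set x : ℝ := |(m:ℝ) + e| with hx
  have hx0 : 0 ≤ x := abs_nonneg _
  have h1 : (1 + x)^2 ≤ Real.exp (2*x) := by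
    rw [two_mul, Real.exp_add]
    have := Real.add_one_le_exp x
    nlinarith [Real.exp_pos x]
  have hsq : ((m:ℝ)+e)^2 = x^2 := (_root_.sq_abs _).symm
  have h2 : -|(m:ℝ)| ≥ -x - |e| := by
    have : |(m:ℝ)| ≤ x + |e| := by
      calc |(m:ℝ)| = |((m:ℝ) + e) + (-e)| := by ring_nf
        _ ≤ |(m:ℝ)+e| + |(-e)| := abs_add_le _ _
        _ = x + |e| := by rw [abs_neg]
    linarith
  calc (1 + x)^2 * Real.exp (-c * ((m:ℝ)+e)^2 + C * x)
      ≤ Real.exp (2*x) * Real.exp (-c * x^2 + C * x) := by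
        rw [hsq]
        exact mul_le_mul_of_nonneg_right h1 (Real.exp_pos _).le
    _ = Real.exp (-c*x^2 + (C+2)*x) := by rw [← Real.exp_add]; ring_nf
    _ ≤ Real.exp ((C+3)^2/(4*c) + |e| + (-|(m:ℝ)|)) := by
        apply Real.exp_le_exp.2
        have key : -c*x^2 + (C+3)*x ≤ (C+3)^2/(4*c) := by
          rw [le_div_iff₀ (by positivity : (0:ℝ) < 4*c)]
          nlinarith [sq_nonneg (2*c*x - (C+3))]
        nlinarith [h2]
    _ = K * Real.exp (-|(m:ℝ)|) := by rw [hK, Real.exp_add]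

lemma posdef_lower {g : ℕ} (hg : 1 ≤ g) (Y : Matrix (Fin g) (Fin g) ℝ) (hY : Y.PosDef) :
    ∃ lam : ℝ, 0 < lam ∧ ∀ w : Fin g → ℝ, lam * (∑ j, w j ^ 2) ≤ w ⬝ᵥ (Y *ᵥ w) := by
  haveI : Nonempty (Fin g) := ⟨⟨0, hg⟩⟩
  set φ : (Fin g → ℝ) → ℝ := fun w => w ⬝ᵥ (Y *ᵥ w) with hφ
  have hcont : Continuous φ := by
    simp only [hφ, dotProduct, Matrix.mulVec]
    apply continuous_finset_sum
    intro i _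
    exact (continuous_apply i).mul
      (continuous_finset_sum _ fun j _ => continuous_const.mul (continuous_apply j))
  have hsph : IsCompact (Metric.sphere (0 : Fin g → ℝ) 1) := isCompact_sphere _ _
  have hne : (Metric.sphere (0 : Fin g → ℝ) 1).Nonempty := by
    refine ⟨fun _ => 1, ?_⟩
    simp [mem_sphere_iff_norm, pi_norm_const]
  obtain ⟨x0, hx0mem, hmin'⟩ := hsph.exists_isMinOn hne hcont.continuousOn
  have hmin : ∀ y ∈ Metric.sphere (0 : Fin g → ℝ) 1, φ x0 ≤ φ y := fun y hy => hmin' hy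
  have hx0norm : ‖x0‖ = 1 := by simpa [mem_sphere_iff_norm] using hx0mem
  have hx0ne : x0 ≠ 0 := by intro h; rw [h] at hx0norm; simp at hx0norm
  set lam : ℝ := φ x0 with hlam
  have hlampos : 0 < lam := by
    have := hY.dotProduct_mulVec_pos hx0ne
    rw [hlam, hφ]
    simpa [dotProduct] using this
  refine ⟨lam / g, div_pos hlampos (by exact_mod_cast Nat.pos_of_ne_zero (by omega)), ?_⟩
  intro w
  rcases eq_or_ne w 0 with rfl | hw
  · simp
  · have hwn : (0:ℝ) < ‖w‖ := norm_pos_iff.2 hw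
    set x : Fin g → ℝ := ‖w‖⁻¹ • w with hx
    have hxs : x ∈ Metric.sphere (0 : Fin g → ℝ) 1 := by
      simp [mem_sphere_iff_norm, hx, norm_smul, abs_of_pos (inv_pos.2 hwn),
        inv_mul_cancel₀ hwn.ne']
    have hscale : φ w = ‖w‖^2 * φ x := by
      rw [hφ]
      simp only [hx, Matrix.mulVec_smul, dotProduct_smul, smul_dotProduct,
        smul_eq_mul]
      field_simp
    have h1 : lam ≤ φ x := hmin x hxs
    have hsum : ∑ j, w j ^ 2 ≤ g * ‖w‖^2 := by
      calc ∑ j, w j ^ 2 ≤ ∑ _j : Fin g, ‖w‖^2 := by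
            apply Finset.sum_le_sum
            intro j _
            have := norm_le_pi_norm w j
            have h0 : |w j| ≤ ‖w‖ := by simpa using this
            nlinarith [abs_nonneg (w j), _root_.sq_abs (w j)]
        _ = g * ‖w‖^2 := by simp [Finset.sum_const, nsmul_eq_mul]
    calc lam / g * ∑ j, w j ^ 2 ≤ lam / g * (g * ‖w‖^2) := by
          apply mul_le_mul_of_nonneg_left hsum (by positivity)
      _ = lam * ‖w‖^2 := by
          field_simp
      _ ≤ φ w := by rw [hscale]; nlinarith

lemma hasDerivAt_tsum_cexp {ι : Type*} [Countable ι] (c α β : ι → ℂ) (u : ι → ℝ)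
    (hu : Summable u) (r : ℝ) (hr : 0 < r)
    (hb : ∀ n (t : ℂ), t ∈ Metric.ball (0:ℂ) r →
      ‖c n * (Complex.exp (α n + t * β n) * β n)‖ ≤ u n)
    (h0 : Summable fun n => c n * Complex.exp (α n)) :
    HasDerivAt (fun t : ℂ => ∑' n, c n * Complex.exp (α n + t * β n))
      (∑' n, c n * Complex.exp (α n) * β n) 0 := by
  have hg : ∀ n (t : ℂ), t ∈ Metric.ball (0:ℂ) r →
      HasDerivAt (fun t : ℂ => c n * Complex.exp (α n + t * β n))
        (c n * (Complex.exp (α n + t * β n) * β n)) t := by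
    intro n t _
    have h1 : HasDerivAt (fun t : ℂ => α n + t * β n) (β n) t := by
      simpa using (hasDerivAt_mul_const (β n)).const_add (α n)
    exact (h1.cexp).const_mul (c n)
  have h0' : Summable fun n => c n * Complex.exp (α n + (0:ℂ) * β n) := by
    simpa using h0
  have key := hasDerivAt_tsum_of_isPreconnected hu Metric.isOpen_ball
    (convex_ball (0:ℂ) r).isPreconnected hg (fun n t ht => hb n t ht)
    (Metric.mem_ball_self hr) h0' (Metric.mem_ball_self hr)
  simpa [mul_assoc] using key

lemma im_dot {g : ℕ} (τ : Matrix (Fin g) (Fin g) ℂ) (w : Fin g → ℝ) :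
    ((fun j => ((w j : ℝ) : ℂ)) ⬝ᵥ (τ *ᵥ fun j => ((w j : ℝ) : ℂ))).im
      = w ⬝ᵥ ((τ.map Complex.im) *ᵥ w) := by
  simp only [dotProduct, Matrix.mulVec, Finset.mul_sum, Complex.im_sum, Matrix.map_apply]
  refine Finset.sum_congr rfl fun i _ => Finset.sum_congr rfl fun j _ => ?_
  simp [Complex.mul_im]

lemma im_dotz {g : ℕ} (z : Fin g → ℂ) (w : Fin g → ℝ) :
    ((fun j => ((w j : ℝ) : ℂ)) ⬝ᵥ z).im = ∑ j, w j * (z j).im := by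
  simp only [dotProduct, Complex.im_sum]
  exact Finset.sum_congr rfl fun j _ => by simp [Complex.mul_im]

lemma one_add_sum_le_prod {ι : Type*} (s : Finset ι) (f : ι → ℝ) (hf : ∀ j ∈ s, 0 ≤ f j) :
    1 + ∑ j ∈ s, f j ≤ ∏ j ∈ s, (1 + f j) := by
  classical
  induction s using Finset.induction_on with
  | empty => simp
  | @insert a s ha ih =>
    rw [Finset.sum_insert ha, Finset.prod_insert ha]
    have h1 := ih (fun j hj => hf j (Finset.mem_insert_of_mem hj))
    have h2 : 0 ≤ ∑ j ∈ s, f j := Finset.sum_nonneg fun j hj => hf j (Finset.mem_insert_of_mem hj)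
    have h3 : 0 ≤ f a := hf a (Finset.mem_insert_self a s)
    nlinarith

/- ===== notation-level definitions ===== -/

def WW {g : ℕ} (ε : Fin g → ℝ) (n : Fin g → ℤ) : Fin g → ℝ := fun j => (n j : ℝ) + ε j

def VV {g : ℕ} (ε : Fin g → ℝ) (n : Fin g → ℤ) : Fin g → ℂ := fun j => (n j : ℂ) + (ε j : ℂ)

def SS {g : ℕ} (ε : Fin g → ℝ) (n : Fin g → ℤ) : ℝ := ∑ j, |WW ε n j|

def NN {g : ℕ} (ε : Fin g → ℝ) (n : Fin g → ℤ) : ℝ := ∑ j, (WW ε n j)^2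

def ZZ {g : ℕ} (z : Fin g → ℂ) : ℝ := ∑ j, |(z j).im|

def AA {g : ℕ} (τ : Matrix (Fin g) (Fin g) ℂ) (ε : Fin g → ℝ) (z : Fin g → ℂ)
    (n : Fin g → ℤ) : ℂ :=
  2 * (Real.pi:ℂ) * Complex.I * (VV ε n ⬝ᵥ (τ *ᵥ VV ε n))
    + 4 * (Real.pi:ℂ) * Complex.I * (VV ε n ⬝ᵥ z)

def DD {g : ℕ} (ε : Fin g → ℝ) (i : Fin g) (n : Fin g → ℤ) : ℂ :=
  4 * (Real.pi:ℂ) * Complex.I * VV ε n i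

lemma VV_eq {g : ℕ} (ε : Fin g → ℝ) (n : Fin g → ℤ) :
    VV ε n = fun j => ((WW ε n j : ℝ) : ℂ) := by
  funext j
  simp [VV, WW]

lemma VV_abs {g : ℕ} (ε : Fin g → ℝ) (n : Fin g → ℤ) (i : Fin g) :
     ‖VV ε n i‖ = |WW ε n i| := by
  rw [VV_eq]
  simp

lemma theta2_eq {g : ℕ} (τ : Matrix (Fin g) (Fin g) ℂ) (ε : Fin g → ℝ) (z : Fin g → ℂ) :
    theta2 τ ε z = ∑' n : Fin g → ℤ, Complex.exp
      (2 * (Real.pi:ℂ) * Complex.I * (VV ε n ⬝ᵥ (τ *ᵥ VV ε n))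
        + 4 * (Real.pi:ℂ) * Complex.I * (VV ε n ⬝ᵥ z)) := rfl

lemma SS_nonneg {g : ℕ} (ε : Fin g → ℝ) (n : Fin g → ℤ) : 0 ≤ SS ε n :=
  Finset.sum_nonneg fun j _ => abs_nonneg _

lemma NN_nonneg {g : ℕ} (ε : Fin g → ℝ) (n : Fin g → ℤ) : 0 ≤ NN ε n :=
  Finset.sum_nonneg fun j _ => sq_nonneg _

lemma ZZ_nonneg {g : ℕ} (z : Fin g → ℂ) : 0 ≤ ZZ z :=
  Finset.sum_nonneg fun j _ => abs_nonneg _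

lemma abs_le_SS {g : ℕ} (ε : Fin g → ℝ) (n : Fin g → ℤ) (i : Fin g) : |WW ε n i| ≤ SS ε n := by
  unfold SS
  exact Finset.single_le_sum (f := fun k => |WW ε n k|) (fun k _ => abs_nonneg _)
    (Finset.mem_univ i)

lemma sq_le_NN {g : ℕ} (ε : Fin g → ℝ) (n : Fin g → ℤ) (i : Fin g) : (WW ε n i)^2 ≤ NN ε n := by
  unfold NN
  exact Finset.single_le_sum (f := fun k => (WW ε n k)^2) (fun k _ => sq_nonneg _)
    (Finset.mem_univ i)

lemma DD_norm {g : ℕ} (ε : Fin g → ℝ) (i : Fin g) (n : Fin g → ℤ) :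
    ‖DD ε i n‖ = 4 * Real.pi * |WW ε n i| := by
  rw [show DD ε i n = 4 * (Real.pi:ℂ) * Complex.I * VV ε n i from rfl]
  rw [norm_mul, norm_mul, norm_mul, VV_abs]
  simp [abs_of_pos Real.pi_pos]

lemma AAre {g : ℕ} (ε : Fin g → ℝ) (τ : Matrix (Fin g) (Fin g) ℂ) (z : Fin g → ℂ)
    (n : Fin g → ℤ) :
    (AA τ ε z n).re = -(2 * Real.pi * (VV ε n ⬝ᵥ (τ *ᵥ VV ε n)).im)
      - 4 * Real.pi * ((VV ε n ⬝ᵥ z).im) := by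
  rw [show AA τ ε z n = 2 * (Real.pi:ℂ) * Complex.I * (VV ε n ⬝ᵥ (τ *ᵥ VV ε n))
    + 4 * (Real.pi:ℂ) * Complex.I * (VV ε n ⬝ᵥ z) from rfl]
  simp [Complex.add_re, Complex.mul_re, Complex.mul_im]
  ring

lemma ImL_le {g : ℕ} (ε : Fin g → ℝ) (z : Fin g → ℂ) (n : Fin g → ℤ) :
    |(VV ε n ⬝ᵥ z).im| ≤ SS ε n * ZZ z := by
  rw [VV_eq, im_dotz]
  calc |∑ j, WW ε n j * (z j).im| ≤ ∑ j, |WW ε n j * (z j).im| :=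
        Finset.abs_sum_le_sum_abs _ _
    _ ≤ ∑ j, |WW ε n j| * ZZ z := by
        apply Finset.sum_le_sum
        intro j _
        rw [abs_mul]
        exact mul_le_mul_of_nonneg_left
          (Finset.single_le_sum (fun k _ => abs_nonneg ((z k).im)) (Finset.mem_univ j))
          (abs_nonneg _)
    _ = SS ε n * ZZ z := by rw [SS, ← Finset.sum_mul]

lemma dot_shift {g : ℕ} (vv zz : Fin g → ℂ) (a b : Fin g) (s t : ℂ) :
    vv ⬝ᵥ (zz + s • (Pi.single a 1 : Fin g → ℂ) + t • (Pi.single b 1 : Fin g → ℂ))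
      = vv ⬝ᵥ zz + s * vv a + t * vv b := by
  rw [dotProduct_add, dotProduct_add, dotProduct_smul, dotProduct_smul,
    dotProduct_single, dotProduct_single]
  simp [smul_eq_mul]

lemma dot_tau {g : ℕ} (vv : Fin g → ℂ) (τ M : Matrix (Fin g) (Fin g) ℂ) (t : ℂ) :
    vv ⬝ᵥ ((τ + t • M) *ᵥ vv) = vv ⬝ᵥ (τ *ᵥ vv) + t * (vv ⬝ᵥ (M *ᵥ vv)) := by
  rw [Matrix.add_mulVec, dotProduct_add, Matrix.smul_mulVec, dotProduct_smul,
    smul_eq_mul]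

lemma q_comp {g : ℕ} (vv : Fin g → ℂ) (i j : Fin g) :
    vv ⬝ᵥ (Matrix.single i j (1:ℂ) *ᵥ vv) = vv i * vv j := by
  rw [Matrix.single_mulVec]
  simp [dotProduct, Function.update_apply]

lemma exists_bound {g : ℕ} (hg : 1 ≤ g) (ε : Fin g → ℝ) (τ : Matrix (Fin g) (Fin g) ℂ)
    (hτ : IsSiegel τ) (z : Fin g → ℂ) :
    ∃ (u : (Fin g → ℤ) → ℝ) (lam : ℝ), Summable u ∧ 0 < lam ∧
      (∀ n, lam * NN ε n ≤ (VV ε n ⬝ᵥ (τ *ᵥ VV ε n)).im) ∧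
      (∀ (n : Fin g → ℤ) (P R : ℝ), 0 ≤ P → P ≤ 16*Real.pi^2*(1 + SS ε n)^2 →
        R ≤ -(Real.pi*lam) * NN ε n + (4*Real.pi*ZZ z + 8*Real.pi) * SS ε n →
        P * Real.exp R ≤ u n) := by
  obtain ⟨lam, hlam, hlow⟩ := posdef_lower hg (τ.map Complex.im) hτ.2
  set c1 : ℝ := 4*Real.pi*ZZ z + 8*Real.pi with hc1
  set hb : Fin g → ℤ → ℝ := fun j m => (1 + |(m:ℝ) + ε j|)^2 *
      Real.exp (-(Real.pi*lam) * ((m:ℝ)+ε j)^2 + c1 * |(m:ℝ)+ε j|) with hhb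
  have hbpos : ∀ j m, 0 ≤ hb j m := fun j m => by positivity
  have hbsum : ∀ j, Summable (hb j) := fun j =>
    summable_one_dim (Real.pi*lam) c1 (ε j) (by positivity)
  refine ⟨fun n => 16*Real.pi^2 * ∏ j, hb j (n j), lam,
    (summable_pi_prod g hb hbpos hbsum).mul_left _, hlam, ?_, ?_⟩
  · intro n
    rw [VV_eq, im_dot]
    exact hlow (WW ε n)
  · intro n P R hP0 hP hR
    have hprodpos : (0:ℝ) ≤ ∏ j, hb j (n j) := Finset.prod_nonneg fun j _ => hbpos _ _
    have key : (1 + SS ε n)^2 * Real.exp (-(Real.pi*lam) * NN ε n + c1 * SS ε n)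
        ≤ ∏ j, hb j (n j) := by
      have h1 : 1 + SS ε n ≤ ∏ j, (1 + |WW ε n j|) :=
        one_add_sum_le_prod _ _ (fun j _ => abs_nonneg _)
      have h2 : Real.exp (-(Real.pi*lam) * NN ε n + c1 * SS ε n)
          = ∏ j, Real.exp (-(Real.pi*lam) * (WW ε n j)^2 + c1 * |WW ε n j|) := by
        rw [← Real.exp_sum]
        congr 1
        rw [NN, SS, Finset.mul_sum, Finset.mul_sum, ← Finset.sum_add_distrib]
      calc (1 + SS ε n)^2 * Real.exp (-(Real.pi*lam) * NN ε n + c1 * SS ε n)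
          ≤ (∏ j, (1 + |WW ε n j|))^2 *
              ∏ j, Real.exp (-(Real.pi*lam) * (WW ε n j)^2 + c1 * |WW ε n j|) := by
            rw [← h2]
            apply mul_le_mul_of_nonneg_right _ (Real.exp_pos _).le
            exact pow_le_pow_left₀ (by linarith [SS_nonneg ε n]) h1 2
        _ = ∏ j, hb j (n j) := by
            rw [← Finset.prod_pow, ← Finset.prod_mul_distrib]
            refine Finset.prod_congr rfl fun j _ => ?_
            simp [hhb, WW]
    calc P * Real.exp R
        ≤ (16*Real.pi^2*(1 + SS ε n)^2) *
            Real.exp (-(Real.pi*lam) * NN ε n + c1 * SS ε n) := by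
          exact mul_le_mul hP (Real.exp_le_exp.2 hR) (Real.exp_pos R).le (by positivity)
      _ = 16*Real.pi^2 * ((1 + SS ε n)^2 *
            Real.exp (-(Real.pi*lam) * NN ε n + c1 * SS ε n)) := by ring
      _ ≤ 16*Real.pi^2 * ∏ j, hb j (n j) :=
          mul_le_mul_of_nonneg_left key (by positivity)

theorem main_aux {g : ℕ} (hg : 1 ≤ g) (ε : Fin g → ℝ) (a b : Fin g)
    (τ : Matrix (Fin g) (Fin g) ℂ) (hτ : IsSiegel τ) (z : Fin g → ℂ)
    (M : Matrix (Fin g) (Fin g) ℂ) (κ : ℂ)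
    (hQ : ∀ n : Fin g → ℤ, (1 + κ) * (VV ε n ⬝ᵥ (M *ᵥ VV ε n)) = 2 * VV ε n a * VV ε n b)
    (hQabs : ∀ n : Fin g → ℤ,
       ‖VV ε n ⬝ᵥ (M *ᵥ VV ε n)‖ ≤ 2 * |WW ε n a| * |WW ε n b|) :
    deriv (fun s : ℂ => deriv (fun t : ℂ =>
        theta2 τ ε (z + s • (Pi.single a 1 : Fin g → ℂ) + t • (Pi.single b 1 : Fin g → ℂ))) 0) 0
      = 4 * (Real.pi : ℂ) * Complex.I * (1 + κ) *
          deriv (fun t : ℂ => theta2 (τ + t • M) ε z) 0 := by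
  obtain ⟨u, lam, husum, hlam, hlow, hmaster⟩ := exists_bound hg ε τ hτ z
  have pi_pos := Real.pi_pos
  have pi_gt := Real.pi_gt_three
  -- re bound for AA
  have hAAre : ∀ n, (AA τ ε z n).re
      ≤ -(2*Real.pi*lam) * NN ε n + 4*Real.pi*(SS ε n * ZZ z) := by
    intro n
    have h1 := AAre ε τ z n
    have h2 := hlow n
    have h3 := ImL_le ε z n
    have h2' : 2*Real.pi*(lam * NN ε n) ≤ 2*Real.pi*(VV ε n ⬝ᵥ (τ *ᵥ VV ε n)).im :=
      mul_le_mul_of_nonneg_left h2 (by positivity)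
    have h3' : 4*Real.pi*|(VV ε n ⬝ᵥ z).im| ≤ 4*Real.pi*(SS ε n * ZZ z) :=
      mul_le_mul_of_nonneg_left h3 (by positivity)
    have h4 : -(VV ε n ⬝ᵥ z).im ≤ |(VV ε n ⬝ᵥ z).im| := neg_le_abs _
    have h4' : -(4*Real.pi*(VV ε n ⬝ᵥ z).im) ≤ 4*Real.pi*|(VV ε n ⬝ᵥ z).im| := by
      nlinarith
    linarith
  -- perturbation bounds
  have hpert : ∀ (n : Fin g → ℤ) (γ : ℂ) (i : Fin g), ‖γ‖ ≤ 1 →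
      (γ * DD ε i n).re ≤ 4*Real.pi*SS ε n := by
    intro n γ i hγ
    calc (γ * DD ε i n).re ≤  ‖γ * DD ε i n‖ := Complex.re_le_norm _
      _ = ‖γ‖ * ‖DD ε i n‖ := by rw [norm_mul]
      _ = ‖γ‖ * (4*Real.pi*|WW ε n i|) := by rw [DD_norm]
      _ ≤ 1 * (4*Real.pi*SS ε n) := by
          apply mul_le_mul hγ _ (by positivity) zero_le_one
          exact mul_le_mul_of_nonneg_left (abs_le_SS ε n i) (by positivity)
      _ = 4*Real.pi*SS ε n := one_mul _
  set βR : (Fin g → ℤ) → ℂ := fun n => 2 * (Real.pi:ℂ) * Complex.I * (VV ε n ⬝ᵥ (M *ᵥ VV ε n))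
    with hβR
  have hβRnorm : ∀ n, ‖βR n‖ ≤ 4*Real.pi*(|WW ε n a| * |WW ε n b|) := by
    intro n
    have habs : ‖βR n‖ = 2 * Real.pi *  ‖VV ε n ⬝ᵥ (M *ᵥ VV ε n)‖ := by
      simp only [hβR]
      rw [norm_mul, norm_mul, norm_mul]
      simp [abs_of_pos pi_pos]
    rw [habs]
    calc 2 * Real.pi *  ‖VV ε n ⬝ᵥ (M *ᵥ VV ε n)‖
        ≤ 2 * Real.pi * (2 * |WW ε n a| * |WW ε n b|) :=
          mul_le_mul_of_nonneg_left (hQabs n) (by positivity)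
      _ = 4*Real.pi*(|WW ε n a| * |WW ε n b|) := by ring
  have hNNb : ∀ n, |WW ε n a| * |WW ε n b| ≤ NN ε n := by
    intro n
    have h1 := sq_le_NN ε n a
    have h2 := sq_le_NN ε n b
    nlinarith [sq_nonneg (|WW ε n a| - |WW ε n b|), _root_.sq_abs (WW ε n a),
      _root_.sq_abs (WW ε n b), abs_nonneg (WW ε n a), abs_nonneg (WW ε n b),
      NN_nonneg ε n]
  have hSle : ∀ n : Fin g → ℤ, SS ε n ≤ (1 + SS ε n)^2 := by
    intro n
    nlinarith [SS_nonneg ε n]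
  have hsqle : ∀ n : Fin g → ℤ, SS ε n ^ 2 ≤ (1 + SS ε n)^2 := by
    intro n
    nlinarith [SS_nonneg ε n]
  have h4pi : 4*Real.pi ≤ 16*Real.pi^2 := by nlinarith
  have hP1 : ∀ n : Fin g → ℤ, (1:ℝ) ≤ 16*Real.pi^2*(1 + SS ε n)^2 := by
    intro n
    calc (1:ℝ) = 1 * 1 := by ring
      _ ≤ (16*Real.pi^2) * (1 + SS ε n)^2 := by
          apply mul_le_mul (by nlinarith) (by nlinarith [SS_nonneg ε n]) zero_le_one
            (by positivity)
  have hP2 : ∀ (n : Fin g → ℤ) (i : Fin g),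
      4*Real.pi*|WW ε n i| ≤ 16*Real.pi^2*(1 + SS ε n)^2 := by
    intro n i
    calc 4*Real.pi*|WW ε n i| ≤ 4*Real.pi*(1 + SS ε n)^2 :=
          mul_le_mul_of_nonneg_left ((abs_le_SS ε n i).trans (hSle n)) (by positivity)
      _ ≤ 16*Real.pi^2*(1 + SS ε n)^2 :=
          mul_le_mul_of_nonneg_right h4pi (sq_nonneg _)
  have hwprod : ∀ (n : Fin g → ℤ) (i j : Fin g),
      |WW ε n i| * |WW ε n j| ≤ (1 + SS ε n)^2 := by
    intro n i j
    have h := mul_le_mul (abs_le_SS ε n i) (abs_le_SS ε n j) (abs_nonneg _) (SS_nonneg ε n)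
    calc |WW ε n i| * |WW ε n j| ≤ SS ε n * SS ε n := h
      _ = SS ε n ^ 2 := by ring
      _ ≤ (1 + SS ε n)^2 := hsqle n
  have hP3 : ∀ (n : Fin g → ℤ) (i j : Fin g),
      4*Real.pi*|WW ε n i| * (4*Real.pi*|WW ε n j|) ≤ 16*Real.pi^2*(1 + SS ε n)^2 := by
    intro n i j
    calc 4*Real.pi*|WW ε n i| * (4*Real.pi*|WW ε n j|)
        = 16*Real.pi^2 * (|WW ε n i| * |WW ε n j|) := by ring
      _ ≤ 16*Real.pi^2*(1 + SS ε n)^2 :=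
          mul_le_mul_of_nonneg_left (hwprod n i j) (by positivity)
  have hP4 : ∀ n : Fin g → ℤ, ‖βR n‖ ≤ 16*Real.pi^2*(1 + SS ε n)^2 := by
    intro n
    calc ‖βR n‖ ≤ 4*Real.pi*(|WW ε n a| * |WW ε n b|) := hβRnorm n
      _ ≤ 4*Real.pi*(1 + SS ε n)^2 :=
          mul_le_mul_of_nonneg_left (hwprod n a b) (by positivity)
      _ ≤ 16*Real.pi^2*(1 + SS ε n)^2 :=
          mul_le_mul_of_nonneg_right h4pi (sq_nonneg _)
  -- the three series derivative facts
  have appL1 : ∀ s : ℂ, ‖s‖ ≤ 1 →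
      HasDerivAt (fun t : ℂ => ∑' n : Fin g → ℤ,
          (1:ℂ) * Complex.exp ((AA τ ε z n + s * DD ε a n) + t * DD ε b n))
        (∑' n : Fin g → ℤ, (1:ℂ) * Complex.exp (AA τ ε z n + s * DD ε a n) * DD ε b n) 0 := by
    intro s hs
    apply hasDerivAt_tsum_cexp _ _ _ u husum 1 one_pos
    · intro n t ht
      have ht' : ‖t‖ ≤ 1 := (mem_ball_zero_iff.1 ht).le
      have heq : ‖(1:ℂ) * (Complex.exp ((AA τ ε z n + s * DD ε a n) + t * DD ε b n) * DD ε b n)‖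
          = (4*Real.pi*|WW ε n b|) *
            Real.exp (((AA τ ε z n + s * DD ε a n) + t * DD ε b n).re) := by
        rw [one_mul, norm_mul, Complex.norm_exp, DD_norm]
        ring
      rw [heq]
      apply hmaster n _ _ (by positivity)
      · exact hP2 n b
      · rw [Complex.add_re, Complex.add_re]
        have e1 := hAAre n
        have e2 := hpert n s a hs
        have e3 := hpert n t b ht'
        nlinarith [NN_nonneg ε n, SS_nonneg ε n, mul_nonneg (mul_nonneg pi_pos.le hlam.le)
          (NN_nonneg ε n)]
    · apply Summable.of_norm_bounded husum
      intro n
      have heq : ‖(1:ℂ) * Complex.exp (AA τ ε z n + s * DD ε a n)‖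
          = 1 * Real.exp ((AA τ ε z n + s * DD ε a n).re) := by
        rw [one_mul, one_mul, Complex.norm_exp]
      rw [heq]
      apply hmaster n _ _ zero_le_one
      · exact hP1 n
      · rw [Complex.add_re]
        have e1 := hAAre n
        have e2 := hpert n s a hs
        nlinarith [NN_nonneg ε n, SS_nonneg ε n, mul_nonneg (mul_nonneg pi_pos.le hlam.le)
          (NN_nonneg ε n)]
  have appL2 : HasDerivAt (fun s : ℂ => ∑' n : Fin g → ℤ,
        DD ε b n * Complex.exp (AA τ ε z n + s * DD ε a n))
      (∑' n : Fin g → ℤ, DD ε b n * Complex.exp (AA τ ε z n) * DD ε a n) 0 := by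
    apply hasDerivAt_tsum_cexp _ _ _ u husum 1 one_pos
    · intro n t ht
      have ht' : ‖t‖ ≤ 1 := (mem_ball_zero_iff.1 ht).le
      have heq : ‖DD ε b n * (Complex.exp (AA τ ε z n + t * DD ε a n) * DD ε a n)‖
          = (4*Real.pi*|WW ε n b| * (4*Real.pi*|WW ε n a|)) *
            Real.exp ((AA τ ε z n + t * DD ε a n).re) := by
        rw [norm_mul, norm_mul, Complex.norm_exp,
          DD_norm, DD_norm]
        ring
      rw [heq]
      apply hmaster n _ _ (by positivity)
      · exact hP3 n b a
      · rw [Complex.add_re]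
        have e1 := hAAre n
        have e3 := hpert n t a ht'
        nlinarith [NN_nonneg ε n, SS_nonneg ε n, mul_nonneg (mul_nonneg pi_pos.le hlam.le)
          (NN_nonneg ε n)]
    · apply Summable.of_norm_bounded husum
      intro n
      have heq : ‖DD ε b n * Complex.exp (AA τ ε z n)‖
          = (4*Real.pi*|WW ε n b|) * Real.exp ((AA τ ε z n).re) := by
        rw [norm_mul, Complex.norm_exp, DD_norm]
      rw [heq]
      apply hmaster n _ _ (by positivity)
      · exact hP2 n b
      · have e1 := hAAre n
        nlinarith [NN_nonneg ε n, SS_nonneg ε n, mul_nonneg (mul_nonneg pi_pos.le hlam.le)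
          (NN_nonneg ε n)]
  have hrpos : (0:ℝ) < min 1 (lam/4) := lt_min one_pos (by positivity)
  have appR : HasDerivAt (fun t : ℂ => ∑' n : Fin g → ℤ,
        (1:ℂ) * Complex.exp (AA τ ε z n + t * βR n))
      (∑' n : Fin g → ℤ, (1:ℂ) * Complex.exp (AA τ ε z n) * βR n) 0 := by
    apply hasDerivAt_tsum_cexp _ _ _ u husum _ hrpos
    · intro n t ht
      have ht' : ‖t‖ ≤ lam/4 :=
        ((mem_ball_zero_iff.1 ht).le).trans (min_le_right _ _)
      have heq : ‖(1:ℂ) * (Complex.exp (AA τ ε z n + t * βR n) * βR n)‖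
          = ‖βR n‖ * Real.exp ((AA τ ε z n + t * βR n).re) := by
        rw [one_mul, norm_mul, Complex.norm_exp]
        ring
      rw [heq]
      apply hmaster n _ _ (norm_nonneg _)
      · exact hP4 n
      · rw [Complex.add_re]
        have e1 := hAAre n
        have e2 : (t * βR n).re ≤ Real.pi * lam * NN ε n := by
          calc (t * βR n).re ≤  ‖t * βR n‖ := Complex.re_le_norm _
            _ = ‖t‖ * ‖βR n‖ := by rw [norm_mul]
            _ ≤ (lam/4) * (4*Real.pi*NN ε n) := by
                apply mul_le_mul ht' _ (norm_nonneg _) (by positivity)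
                calc ‖βR n‖ ≤ 4*Real.pi*(|WW ε n a| * |WW ε n b|) := hβRnorm n
                  _ ≤ 4*Real.pi*NN ε n :=
                    mul_le_mul_of_nonneg_left (hNNb n) (by positivity)
            _ = Real.pi * lam * NN ε n := by ring
        nlinarith [NN_nonneg ε n, SS_nonneg ε n, mul_nonneg (mul_nonneg pi_pos.le hlam.le)
          (NN_nonneg ε n)]
    · apply Summable.of_norm_bounded husum
      intro n
      have heq : ‖(1:ℂ) * Complex.exp (AA τ ε z n)‖
          = 1 * Real.exp ((AA τ ε z n).re) := by
        rw [one_mul, one_mul, Complex.norm_exp]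
      rw [heq]
      apply hmaster n _ _ zero_le_one
      · exact hP1 n
      · have e1 := hAAre n
        nlinarith [NN_nonneg ε n, SS_nonneg ε n, mul_nonneg (mul_nonneg pi_pos.le hlam.le)
          (NN_nonneg ε n)]
  -- rewrite the inner function
  have hinner : ∀ s : ℂ, ‖s‖ ≤ 1 →
      deriv (fun t : ℂ => theta2 τ ε
        (z + s • (Pi.single a 1 : Fin g → ℂ) + t • (Pi.single b 1 : Fin g → ℂ))) 0
      = ∑' n : Fin g → ℤ, DD ε b n * Complex.exp (AA τ ε z n + s * DD ε a n) := by
    intro s hs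
    have e1 : (fun t : ℂ => theta2 τ ε
        (z + s • (Pi.single a 1 : Fin g → ℂ) + t • (Pi.single b 1 : Fin g → ℂ)))
        = fun t : ℂ => ∑' n : Fin g → ℤ,
          (1:ℂ) * Complex.exp ((AA τ ε z n + s * DD ε a n) + t * DD ε b n) := by
      funext t
      rw [theta2_eq]
      refine tsum_congr fun n => ?_
      rw [one_mul]
      congr 1
      rw [dot_shift]
      rw [show AA τ ε z n = 2 * (Real.pi:ℂ) * Complex.I * (VV ε n ⬝ᵥ (τ *ᵥ VV ε n))
        + 4 * (Real.pi:ℂ) * Complex.I * (VV ε n ⬝ᵥ z) from rfl,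
        show DD ε a n = 4 * (Real.pi:ℂ) * Complex.I * VV ε n a from rfl,
        show DD ε b n = 4 * (Real.pi:ℂ) * Complex.I * VV ε n b from rfl]
      ring
    rw [e1, (appL1 s hs).deriv]
    exact tsum_congr fun n => by ring
  have houter : (fun s : ℂ => deriv (fun t : ℂ => theta2 τ ε
        (z + s • (Pi.single a 1 : Fin g → ℂ) + t • (Pi.single b 1 : Fin g → ℂ))) 0)
      =ᶠ[nhds (0:ℂ)] (fun s : ℂ => ∑' n : Fin g → ℤ,
        DD ε b n * Complex.exp (AA τ ε z n + s * DD ε a n)) := by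
    filter_upwards [Metric.ball_mem_nhds (0:ℂ) one_pos] with s hs
    exact hinner s (mem_ball_zero_iff.1 hs).le
  rw [houter.deriv_eq, appL2.deriv]
  -- rewrite the RHS function
  have e2 : (fun t : ℂ => theta2 (τ + t • M) ε z)
      = fun t : ℂ => ∑' n : Fin g → ℤ, (1:ℂ) * Complex.exp (AA τ ε z n + t * βR n) := by
    funext t
    rw [theta2_eq]
    refine tsum_congr fun n => ?_
    rw [one_mul]
    congr 1
    rw [dot_tau]
    rw [show AA τ ε z n = 2 * (Real.pi:ℂ) * Complex.I * (VV ε n ⬝ᵥ (τ *ᵥ VV ε n))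
      + 4 * (Real.pi:ℂ) * Complex.I * (VV ε n ⬝ᵥ z) from rfl,
      show βR n = 2 * (Real.pi:ℂ) * Complex.I * (VV ε n ⬝ᵥ (M *ᵥ VV ε n)) from rfl]
    ring
  rw [e2, appR.deriv, ← tsum_mul_left]
  refine tsum_congr fun n => ?_
  have h := hQ n
  rw [show DD ε a n = 4 * (Real.pi:ℂ) * Complex.I * VV ε n a from rfl,
    show DD ε b n = 4 * (Real.pi:ℂ) * Complex.I * VV ε n b from rfl,
    show βR n = 2 * (Real.pi:ℂ) * Complex.I * (VV ε n ⬝ᵥ (M *ᵥ VV ε n)) from rfl]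
  linear_combination (-8 * (Real.pi:ℂ)^2 * Complex.I^2 * Complex.exp (AA τ ε z n)) * h


/-- the heat equation for second-order theta functions. -/
theorem theta2_heat_equation (g : ℕ) (hg : 1 ≤ g) (ε : Fin g → ℝ)
    (hε : ∀ i, ε i = 0 ∨ ε i = 1/2) (a b : Fin g)
    (τ : Matrix (Fin g) (Fin g) ℂ) (hτ : IsSiegel τ) (z : Fin g → ℂ) :
    deriv (fun s : ℂ => deriv (fun t : ℂ =>
        theta2 τ ε (z + s • (Pi.single a 1 : Fin g → ℂ) + t • (Pi.single b 1 : Fin g → ℂ))) 0) 0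
      = 4 * (Real.pi : ℂ) * Complex.I * (1 + if a = b then 1 else 0) *
          deriv (fun t : ℂ => theta2
            (τ + t • (if a = b then Matrix.single a a (1 : ℂ)
              else Matrix.single a b 1 + Matrix.single b a 1)) ε z) 0 := by
  rcases eq_or_ne a b with rfl | hab
  · simp only [if_pos rfl]
    have hQ : ∀ n : Fin g → ℤ, ((1:ℂ) + 1) *
        (VV ε n ⬝ᵥ (Matrix.single a a (1:ℂ) *ᵥ VV ε n)) = 2 * VV ε n a * VV ε n a := by
      intro n
      rw [q_comp]
      ring
    have hQabs : ∀ n : Fin g → ℤ, 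
        ‖VV ε n ⬝ᵥ (Matrix.single a a (1:ℂ) *ᵥ VV ε n)‖
        ≤ 2 * |WW ε n a| * |WW ε n a| := by
      intro n
      rw [q_comp, norm_mul, VV_abs]
      nlinarith [mul_self_nonneg (|WW ε n a|)]
    exact main_aux hg ε a a τ hτ z _ 1 hQ hQabs
  · simp only [if_neg hab]
    have hQ : ∀ n : Fin g → ℤ, ((1:ℂ) + 0) *
        (VV ε n ⬝ᵥ ((Matrix.single a b (1:ℂ) + Matrix.single b a 1) *ᵥ VV ε n))
        = 2 * VV ε n a * VV ε n b := by
      intro n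
      rw [Matrix.add_mulVec, dotProduct_add, q_comp, q_comp]
      ring
    have hQabs : ∀ n : Fin g → ℤ, 
        ‖VV ε n ⬝ᵥ ((Matrix.single a b (1:ℂ) + Matrix.single b a 1) *ᵥ VV ε n)‖
        ≤ 2 * |WW ε n a| * |WW ε n b| := by
      intro n
      rw [Matrix.add_mulVec, dotProduct_add]
      calc  ‖VV ε n ⬝ᵥ (Matrix.single a b (1:ℂ) *ᵥ VV ε n)
            + VV ε n ⬝ᵥ (Matrix.single b a (1:ℂ) *ᵥ VV ε n)‖
          ≤  ‖VV ε n ⬝ᵥ (Matrix.single a b (1:ℂ) *ᵥ VV ε n)‖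
            +  ‖VV ε n ⬝ᵥ (Matrix.single b a (1:ℂ) *ᵥ VV ε n)‖ :=
            norm_add_le _ _
        _ = |WW ε n a| * |WW ε n b| + |WW ε n b| * |WW ε n a| := by
            rw [q_comp, q_comp, norm_mul, norm_mul, VV_abs, VV_abs]
        _ = 2 * |WW ε n a| * |WW ε n b| := by ring
    exact main_aux hg ε a b τ hτ z _ 0 hQ hQabs


end
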